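/- arXiv:0901.3374 — 3 statements merged into one kernel-verified Lean document; each statement's English description precedes it below -/
import Mathlib

section
/- Let G be a countable group acting freely and measure-preservingly on a probability space (X, μ), with orbit equivalence relation measure ν on R_α. For η in the image of ℓ²(G) inside L²(R_α) (i.e., η is constant equal to η(g) on each graph {(α(g)x, x)}), and for a measurable set A ⊆ X with characteristic projection q = χ_A acting by multiplication in both the left variable and (via the involution J) the right variable, one has ‖η − q J q J η‖² ≤ (2 − 2 μ(A)) ‖η‖², where (Jξ)(x,y) = conj(ξ(y,x)). -/
/-!
On the graph of `α g` the vector `η` is a.e. the constant `c g`, and that graph meets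
`A × A` exactly over `(α g)⁻¹' A ∩ A`. So the graph contributes `‖c g‖² μ((α g)⁻¹' A ∩ A)ᶜ`
to `‖η − qJqJη‖²` and `‖c g‖²` to `‖η‖²`; since `α g` preserves `μ`, the complement has
measure at most `μ((α g)⁻¹' Aᶜ) + μ Aᶜ = 2 − 2μ(A)`. Summing over `g` gives the claim.
-/

open MeasureTheory
open scoped ENNReal NNReal

theorem lintegral_nnnorm_sub_indicator_sq {Y E : Type*} [MeasurableSpace Y] [NormedAddCommGroup E]
    (ν : Measure Y) (f : Y → E) {s : Set Y} (hs : MeasurableSet s) :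
    ∫⁻ p, (‖f p - s.indicator f p‖₊ : ℝ≥0∞) ^ 2 ∂ν = ∫⁻ p in sᶜ, (‖f p‖₊ : ℝ≥0∞) ^ 2 ∂ν := by
  rw [← lintegral_indicator hs.compl]
  refine lintegral_congr fun p => ?_
  by_cases hp : p ∈ s <;> simp [hp]

theorem setLIntegral_map_of_comp_ae_eq_const {X Y : Type*} [MeasurableSpace X]
    [MeasurableSpace Y] {μ : Measure X} {φ : X → Y} (hφ : Measurable φ) {F : Y → ℝ≥0∞}
    (hF : Measurable F) {C : ℝ≥0∞} (hC : ∀ᵐ x ∂μ, F (φ x) = C) {s : Set Y}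
    (hs : MeasurableSet s) :
    ∫⁻ y in s, F y ∂μ.map φ = C * μ (φ ⁻¹' s) := by
  rw [setLIntegral_map hs hF hφ, ← setLIntegral_const]
  exact setLIntegral_congr_fun_ae (hφ hs) (hC.mono fun x hx _ => hx)

theorem MeasureTheory.MeasurePreserving.measure_compl_preimage_inter_le {X : Type*}
    [MeasurableSpace X] {μ : Measure X} {T : X → X} (hT : MeasurePreserving T μ μ)
    {A : Set X} (hA : MeasurableSet A) :
    μ (T ⁻¹' A ∩ A)ᶜ ≤ 2 * μ Aᶜ := by
  calc μ (T ⁻¹' A ∩ A)ᶜ = μ (T ⁻¹' Aᶜ ∪ Aᶜ) := by rw [Set.compl_inter, Set.preimage_compl]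
    _ ≤ μ (T ⁻¹' Aᶜ) + μ Aᶜ := measure_union_le _ _
    _ = 2 * μ Aᶜ := by
      rw [hT.measure_preimage hA.compl.nullMeasurableSet, two_mul]

theorem norm_sq_sub_corner_restriction_le_general
    {X : Type*} [MeasurableSpace X] (μ : Measure X) [IsProbabilityMeasure μ]
    {G : Type*}
    (α : G → X → X)
    (hmp : ∀ g, MeasurePreserving (α g) μ μ)
    (ν : Measure (X × X))
    (hν : ν = Measure.sum fun g : G => Measure.map (fun x => (α g x, x)) μ)
    (η : X × X → ℂ) (hη : Measurable η)
    (c : G → ℂ) (hconst : ∀ g : G, ∀ᵐ x ∂μ, η (α g x, x) = c g)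
    (A : Set X) (hA : MeasurableSet A) :
    ∫⁻ p, (‖η p - (A ×ˢ A).indicator η p‖₊ : ℝ≥0∞) ^ 2 ∂ν
      ≤ (2 - 2 * μ A) * ∫⁻ p, (‖η p‖₊ : ℝ≥0∞) ^ 2 ∂ν := by
  subst hν
  have hcorner : MeasurableSet (A ×ˢ A) := hA.prod hA
  have hgraph : ∀ g, Measurable fun x => (α g x, x) :=
    fun g => (hmp g).measurable.prodMk measurable_id
  have hF : Measurable fun p => (‖η p‖₊ : ℝ≥0∞) ^ 2 := hη.nnnorm.coe_nnreal_ennreal.pow_const 2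
  have hconst_sq : ∀ g, ∀ᵐ x ∂μ, (‖η (α g x, x)‖₊ : ℝ≥0∞) ^ 2 = (‖c g‖₊ : ℝ≥0∞) ^ 2 :=
    fun g => (hconst g).mono fun x hx => by rw [hx]
  rw [lintegral_nnnorm_sub_indicator_sq _ _ hcorner, Measure.restrict_sum _ hcorner.compl,
    lintegral_sum_measure, lintegral_sum_measure, ← ENNReal.tsum_mul_left]
  refine ENNReal.tsum_le_tsum fun g => ?_
  rw [setLIntegral_map_of_comp_ae_eq_const (hgraph g) hF (hconst_sq g) hcorner.compl,
    ← setLIntegral_univ,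
    setLIntegral_map_of_comp_ae_eq_const (hgraph g) hF (hconst_sq g) MeasurableSet.univ,
    Set.preimage_univ, measure_univ, mul_one, mul_comm]
  have hcompl : μ (α g ⁻¹' A ∩ A)ᶜ ≤ 2 - 2 * μ A := by
    calc μ (α g ⁻¹' A ∩ A)ᶜ ≤ 2 * μ Aᶜ := (hmp g).measure_compl_preimage_inter_le hA
      _ = 2 - 2 * μ A := by rw [prob_compl_eq_one_sub hA, ENNReal.mul_sub (by simp), mul_one]
  exact mul_le_mul_left hcompl _

/-- with `ν` the Feldman–Moore measure of a free m.p. action `α` of a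
countable group `G` on the probability space `(X, μ)`, if `η` lies in the embedded copy of
`ℓ²(G)` in `L²(R_α)` (a.e. constant `c g` on the graph of each `α g`), and `q = χ_A` acts
on `L²(R_α)` in the left variable and `JqJ` in the right variable (so `qJqJη` is the
restriction of `η` to `A × A`), then `‖η − qJqJη‖² ≤ (2 − 2 μ(A)) ‖η‖²`. -/
theorem norm_sq_sub_corner_restriction_le
    {X : Type*} [MeasurableSpace X] (μ : Measure X) [IsProbabilityMeasure μ]
    {G : Type*} [Group G] [Countable G]
    (α : G → X → X)
    (hmeas : ∀ g, Measurable (α g))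
    (hmul : ∀ g h x, α (g * h) x = α g (α h x)) (hone : ∀ x, α 1 x = x)
    (hmp : ∀ g, MeasurePreserving (α g) μ μ)
    (hfree : ∀ᵐ x ∂μ, ∀ g : G, α g x = x → g = 1)
    (ν : Measure (X × X))
    (hν : ν = Measure.sum fun g : G => Measure.map (fun x => (α g x, x)) μ)
    (η : X × X → ℂ) (hη : Measurable η)
    (c : G → ℂ) (hconst : ∀ g : G, ∀ᵐ x ∂μ, η (α g x, x) = c g)
    (A : Set X) (hA : MeasurableSet A) :
    ∫⁻ p, (‖η p - (A ×ˢ A).indicator η p‖₊ : ℝ≥0∞) ^ 2 ∂ν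
      ≤ (2 - 2 * μ A) * ∫⁻ p, (‖η p‖₊ : ℝ≥0∞) ^ 2 ∂ν :=
  norm_sq_sub_corner_restriction_le_general μ α hmp ν hν η hη c hconst A hA
end

section
/- Let Γ be a countable group acting by measure-preserving transformations β on a measure space (Y, μ), let X ⊆ Y with μ(X) = 1, and let G act freely measure-preservingly on X by α with α(G)x ⊆ β(Γ)x for a.e. x ∈ X. For g ∈ G and a finite set Γ₀ ⊆ Γ, let q ∈ L∞(X) be a projection. Then q f(g) ≤ e(Γ₀) (as projections on L²(R_β)) if and only if there exists a measurable partition {q_γ : γ ∈ Γ₀} of q in L∞(X) such that q v_g = ∑_{γ ∈ Γ₀} q_γ u_γ, where v_g and u_γ are the unitaries/isometries implementing α(g) and β(γ), and f(g), e(γ) are the projections onto functions supported on the graphs of α(g) and β(γ) respectively. -/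
/-!
A measurable set is null for the Feldman–Moore measure `∑ γ, (y ↦ (β γ y, y))_* μ` iff its
section along the graph of every `β γ` is `μ`-null. As the orbits of `α` lie in those of `β`,
for almost every `x ∈ A` some `β γ` agrees with `α g` at `x`, so the left-hand side says that
almost every `x ∈ A` satisfies `α g x = β γ x` for some `γ ∈ Γ₀`. The sets `A ∩ {α g = β γ}`,
`γ ∈ Γ₀`, made disjoint along a well-order of `Γ`, are then the required partition of `A`.
-/

open MeasureTheory Set
open scoped Function

theorem exists_pairwise_disjoint_measurableSet_subset_iUnion_eq {α ι : Type*}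
    [MeasurableSpace α] [Countable ι] {E : ι → Set α} (hE : ∀ i, MeasurableSet (E i)) :
    ∃ q : ι → Set α, (∀ i, MeasurableSet (q i)) ∧ (∀ i, q i ⊆ E i) ∧
      Pairwise (Disjoint on q) ∧ ⋃ i, q i = ⋃ i, E i := by
  let r : ι → ι → Prop := WellOrderingRel
  let q i := E i \ ⋃ j ∈ {j | r j i}, E j
  have hlt : ∀ i j, r i j → Disjoint (q i) (q j) := fun i j hij =>
    disjoint_left.2 fun y hi hj => hj.2 (mem_biUnion hij hi.1)
  refine ⟨q, fun i => ?_, fun i => sdiff_subset, fun i j hij => ?_, ?_⟩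
  · exact (hE i).diff (.biUnion (to_countable _) fun j _ => hE j)
  · rcases trichotomous_of r i j with h | h | h
    · exact hlt i j h
    · exact absurd h hij
    · exact (hlt j i h).symm
  · refine (iUnion_mono fun i => sdiff_subset).antisymm (iUnion_subset fun i y hy => ?_)
    have wf := (WellOrderingRel.isWellOrder (α := ι)).wf
    have hne : {j | y ∈ E j}.Nonempty := ⟨i, hy⟩
    refine mem_iUnion.2 ⟨wf.min _ hne, wf.min_mem _ hne, ?_⟩
    simp only [mem_iUnion, not_exists]
    exact fun j hj hyj => wf.not_lt_min _ hyj hj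

theorem Measure.sum_map_graph_eq_zero_iff {Y Γ : Type*} [MeasurableSpace Y] (μ : Measure Y)
    {β : Γ → Y → Y} (hβ : ∀ γ, Measurable (β γ)) {S : Set (Y × Y)} (hS : MeasurableSet S) :
    Measure.sum (fun γ => μ.map fun y => (β γ y, y)) S = 0 ↔ ∀ γ, ∀ᵐ y ∂μ, (β γ y, y) ∉ S := by
  rw [Measure.sum_apply _ hS, ENNReal.tsum_eq_zero]
  refine forall_congr' fun γ => ?_
  rw [Measure.map_apply ((hβ γ).prodMk measurable_id') hS, measure_eq_zero_iff_ae_notMem]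
  rfl

section GraphCover

variable {Y Γ : Type*} [MeasurableSpace Y] [MeasurableEq Y] {μ : Measure Y}
  {β : Γ → Y → Y} {f : Y → Y} {A : Set Y} {Γ₀ : Finset Γ}

theorem measurableSet_graph_diff_biUnion_graph (hβ : ∀ γ, Measurable (β γ))
    (hf : Measurable f) (hA : MeasurableSet A) :
    MeasurableSet ({p : Y × Y | p.2 ∈ A ∧ p.1 = f p.2} \ ⋃ γ ∈ Γ₀, {p : Y × Y | p.1 = β γ p.2}) :=
  ((measurable_snd hA).inter (measurableSet_eq_fun measurable_fst (hf.comp measurable_snd))).diff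
    (.biUnion Γ₀.countable_toSet fun γ _ =>
      measurableSet_eq_fun measurable_fst ((hβ γ).comp measurable_snd))

theorem sum_map_graph_diff_eq_zero_iff [Countable Γ] (hβ : ∀ γ, Measurable (β γ))
    (hf : Measurable f) (hA : MeasurableSet A) (horb : ∀ᵐ y ∂μ, y ∈ A → ∃ γ, f y = β γ y) :
    Measure.sum (fun γ => μ.map fun y => (β γ y, y))
        ({p : Y × Y | p.2 ∈ A ∧ p.1 = f p.2} \ ⋃ γ ∈ Γ₀, {p : Y × Y | p.1 = β γ p.2}) = 0 ↔
      ∀ᵐ y ∂μ, y ∈ A → ∃ γ ∈ Γ₀, f y = β γ y := by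
  rw [Measure.sum_map_graph_eq_zero_iff μ hβ (measurableSet_graph_diff_biUnion_graph hβ hf hA),
    ← ae_all_iff]
  refine Filter.eventually_congr (horb.mono fun y hy => ?_)
  simp only [mem_sdiff, mem_ofPred_eq, mem_iUnion, exists_prop, not_and, not_not]
  constructor
  · intro h hyA
    obtain ⟨γ, hγ⟩ := hy hyA
    obtain ⟨δ, hδ, hγδ⟩ := h γ ⟨hyA, hγ.symm⟩
    exact ⟨δ, hδ, hγ.trans hγδ⟩
  · rintro h γ ⟨hyA, hγ⟩
    obtain ⟨δ, hδ, hfδ⟩ := h hyA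
    exact ⟨δ, hδ, hγ.trans hfδ⟩

theorem ae_exists_mem_finset_eq_iff_exists_partition [Countable Γ]
    (hβ : ∀ γ, Measurable (β γ)) (hf : Measurable f) (hA : MeasurableSet A) :
    (∀ᵐ y ∂μ, y ∈ A → ∃ γ ∈ Γ₀, f y = β γ y) ↔
      ∃ q : Γ → Set Y,
        (∀ γ, MeasurableSet (q γ)) ∧ (∀ γ, q γ ⊆ A) ∧ (∀ γ ∉ Γ₀, q γ = ∅) ∧
        Pairwise (Disjoint on q) ∧ μ (A \ ⋃ γ, q γ) = 0 ∧
        (∀ γ, ∀ᵐ x ∂μ, x ∈ q γ → f x = β γ x) := by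
  constructor
  · intro h
    obtain ⟨q, hqm, hqE, hqdisj, hqU⟩ :=
      exists_pairwise_disjoint_measurableSet_subset_iUnion_eq
        (E := fun γ => {y | y ∈ A ∧ γ ∈ Γ₀ ∧ f y = β γ y})
        fun γ => hA.inter ((MeasurableSet.const _).inter (measurableSet_eq_fun hf (hβ γ)))
    refine ⟨q, hqm, fun γ y hy => (hqE γ hy).1,
      fun γ hγ => eq_empty_of_forall_notMem fun y hy => hγ (hqE γ hy).2.1, hqdisj, ?_,
      fun γ => .of_forall fun y hy => (hqE γ hy).2.2⟩
    rw [hqU, measure_eq_zero_iff_ae_notMem]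
    filter_upwards [h] with y hy ⟨hyA, hyU⟩
    obtain ⟨γ, hγ, hfγ⟩ := hy hyA
    exact hyU (mem_iUnion.2 ⟨γ, hyA, hγ, hfγ⟩)
  · rintro ⟨q, -, -, hq0, -, hqA, hqeq⟩
    filter_upwards [measure_eq_zero_iff_ae_notMem.1 hqA, ae_all_iff.2 hqeq] with y hyA hyeq hy
    obtain ⟨γ, hyγ⟩ := mem_iUnion.1 (not_notMem.1 fun h => hyA ⟨hy, h⟩)
    refine ⟨γ, ?_, hyeq γ hyγ⟩
    by_contra hγ
    simp [hq0 γ hγ] at hyγ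

end GraphCover

theorem corner_le_iff_partition_general
    {Y : Type*} [MeasurableSpace Y] [StandardBorelSpace Y]
    (μ : Measure Y)
    {Γ : Type*} [Countable Γ]
    (β : Γ → Y → Y)
    (hβmeas : ∀ γ, Measurable (β γ))
    (X : Set Y)
    {G : Type*}
    (α : G → Y → Y)
    (hαmeas : ∀ g, Measurable (α g))
    (horb : ∀ᵐ x ∂μ.restrict X, ∀ g : G, ∃ γ : Γ, α g x = β γ x)
    (ν : Measure (Y × Y))
    (hν : ν = Measure.sum fun γ : Γ => Measure.map (fun y => (β γ y, y)) μ)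
    (g : G) (Γ₀ : Finset Γ)
    (A : Set Y) (hA : MeasurableSet A) (hAX : A ⊆ X) :
    ν ({p : Y × Y | p.2 ∈ A ∧ p.1 = α g p.2} \ ⋃ γ ∈ Γ₀, {p : Y × Y | p.1 = β γ p.2}) = 0
      ↔
    ∃ q : Γ → Set Y,
      (∀ γ, MeasurableSet (q γ)) ∧ (∀ γ, q γ ⊆ A) ∧ (∀ γ ∉ Γ₀, q γ = ∅) ∧
      Pairwise (Function.onFun Disjoint q) ∧ μ (A \ ⋃ γ : Γ, q γ) = 0 ∧
      (∀ γ : Γ, ∀ᵐ x ∂μ, x ∈ q γ → α g x = β γ x) := by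
  subst hν
  have horbA : ∀ᵐ y ∂μ, y ∈ A → ∃ γ, α g y = β γ y :=
    (ae_restrict_iff' hA).1 ((ae_restrict_of_ae_restrict_of_subset hAX horb).mono fun _ h => h g)
  rw [sum_map_graph_diff_eq_zero_iff hβmeas (hαmeas g) hA horbA,
    ae_exists_mem_finset_eq_iff_exists_partition hβmeas (hαmeas g) hA]

/-- with `β` a free m.p. action of `Γ` on `(Y, μ)`, `X ⊆ Y` of measure `1`,
and `α` a free m.p. action of `G` on `X` with `α`-orbits inside `β`-orbits, let `ν` be the
Feldman–Moore measure on `R_β`, let `g ∈ G`, `Γ₀ ⊆ Γ` finite, and let `q = χ_A` be a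
projection in `L∞(X)`. Then `q f(g) ≤ e(Γ₀)` — i.e. `ν`-a.e. point of the graph of `α g`
over `A` lies in `⋃_{γ ∈ Γ₀}` (graph of `β γ`) — if and only if there is a measurable
partition `{q γ}_{γ ∈ Γ₀}` of `q` (a.e.) in `L∞(X)` such that `q v_g = ∑_{γ ∈ Γ₀} q_γ u_γ`,
i.e. a.e. on `q γ` the transformation `α g` agrees with `β γ`. -/
theorem corner_le_iff_partition
    {Y : Type*} [MeasurableSpace Y] [StandardBorelSpace Y]
    (μ : Measure Y) [SigmaFinite μ]
    {Γ : Type*} [Group Γ] [Countable Γ]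
    (β : Γ → Y → Y)
    (hβmeas : ∀ γ, Measurable (β γ))
    (hβmul : ∀ γ δ y, β (γ * δ) y = β γ (β δ y)) (hβone : ∀ y, β 1 y = y)
    (hβmp : ∀ γ, MeasurePreserving (β γ) μ μ)
    (hβfree : ∀ᵐ y ∂μ, ∀ γ : Γ, β γ y = y → γ = 1)
    (X : Set Y) (hX : MeasurableSet X) (hX1 : μ X = 1)
    {G : Type*} [Group G] [Countable G]
    (α : G → Y → Y)
    (hαmeas : ∀ g, Measurable (α g))
    (hαX : ∀ g, Set.MapsTo (α g) X X)
    (hαmul : ∀ g h, ∀ x ∈ X, α (g * h) x = α g (α h x))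
    (hαone : ∀ x ∈ X, α 1 x = x)
    (hαmp : ∀ g, MeasurePreserving (α g) (μ.restrict X) (μ.restrict X))
    (hαfree : ∀ᵐ x ∂μ.restrict X, ∀ g : G, α g x = x → g = 1)
    (horb : ∀ᵐ x ∂μ.restrict X, ∀ g : G, ∃ γ : Γ, α g x = β γ x)
    (ν : Measure (Y × Y))
    (hν : ν = Measure.sum fun γ : Γ => Measure.map (fun y => (β γ y, y)) μ)
    (g : G) (Γ₀ : Finset Γ)
    (A : Set Y) (hA : MeasurableSet A) (hAX : A ⊆ X) :
    ν ({p : Y × Y | p.2 ∈ A ∧ p.1 = α g p.2} \ ⋃ γ ∈ Γ₀, {p : Y × Y | p.1 = β γ p.2}) = 0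
      ↔
    ∃ q : Γ → Set Y,
      (∀ γ, MeasurableSet (q γ)) ∧ (∀ γ, q γ ⊆ A) ∧ (∀ γ ∉ Γ₀, q γ = ∅) ∧
      Pairwise (Function.onFun Disjoint q) ∧ μ (A \ ⋃ γ : Γ, q γ) = 0 ∧
      (∀ γ : Γ, ∀ᵐ x ∂μ, x ∈ q γ → α g x = β γ x) :=
  corner_le_iff_partition_general μ β hβmeas X α hαmeas horb ν hν g Γ₀ A hA hAX
end

section
/- If G is a countable group in Ozawa's class S and H ⊆ G is a subgroup whose centralizer Z_G(H) is non-amenable, then H is finite. -/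
section ClassS

variable (G : Type) [Group G]

/-- The left-times-right translation `x ↦ s.1 * x * s.2⁻¹` of `s : G × G` on `G`, extended
continuously to the Stone–Čech compactification `βG` of the discrete space `G`. -/
noncomputable def lrTranslationExt [TopologicalSpace G] [DiscreteTopology G]
    (s : G × G) : StoneCech G → StoneCech G :=
  stoneCechExtend
    (continuous_stoneCechUnit.comp
      (continuous_of_discreteTopology (f := fun x : G => s.1 * x * s.2⁻¹)))

/-- The corona `βG ∖ G` of the discrete group `G`: the complement in the Stone–Čech
compactification of the (open, discrete) image of `G`. -/
def corona [TopologicalSpace G] : Set (StoneCech G) :=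
  {z | z ∉ Set.range (stoneCechUnit : G → StoneCech G)}

/-- Ozawa's class `S`: the countable group `G` belongs to `S` when the left-times-right
translation action of `G × G` on the corona `βG ∖ G` is (topologically) amenable, i.e.
there exist weak-*-continuous, almost equivariant maps from `βG ∖ G` to the probability
measures on `G × G`. -/
def InClassS : Prop :=
  letI : TopologicalSpace G := ⊥
  haveI : DiscreteTopology G := ⟨rfl⟩
  ∀ (F : Finset (G × G)) (ε : ℝ), 0 < ε →
    ∃ m : StoneCech G → G × G → ℝ,
      (∀ z ∈ corona G, ∀ s : G × G, 0 ≤ m z s) ∧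
      (∀ z ∈ corona G, HasSum (m z) 1) ∧
      (∀ s : G × G, ContinuousOn (fun z => m z s) (corona G)) ∧
      (∀ s ∈ F, ∀ z ∈ corona G,
        ∑' t : G × G, |m (lrTranslationExt G s z) t - m z (s⁻¹ * t)| ≤ ε)

end ClassS

/-- A group is amenable: it admits a left-invariant finitely additive probability measure. -/
def IsAmenableGroup (G : Type*) [Group G] : Prop :=
  ∃ m : Set G → ℝ,
    m Set.univ = 1 ∧ (∀ A : Set G, 0 ≤ m A) ∧
    (∀ A B : Set G, Disjoint A B → m (A ∪ B) = m A + m B) ∧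
    (∀ (g : G) (A : Set G), m ((g * ·) '' A) = m A)

/-!
If `H` is infinite, it has a cluster point `z` in the corona `βG ∖ G`. Conjugation by an element
of `Z_G(H)` fixes `H` pointwise, hence fixes `z`. Evaluating at `z` the almost equivariant maps
given by class `S` yields probability vectors on `G × G` that are almost invariant under the
diagonal copy of `Z_G(H)`; pushing them forward along a `Z_G(H)`-equivariant map `G → Z_G(H)`
and taking an ultralimit gives an invariant mean on `Z_G(H)`.
-/

open Filter Set Topology

structure IsFinitelyAdditiveProbability {Γ : Type*} (ν : Set Γ → ℝ) : Prop where
  univ_eq_one : ν univ = 1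
  nonneg : ∀ A, 0 ≤ ν A
  union_of_disjoint : ∀ A B, Disjoint A B → ν (A ∪ B) = ν A + ν B

namespace IsFinitelyAdditiveProbability

variable {Γ ι : Type*} {ν : Set Γ → ℝ}

theorem le_one (hν : IsFinitelyAdditiveProbability ν) (A : Set Γ) : ν A ≤ 1 := by
  have := hν.union_of_disjoint A Aᶜ disjoint_compl_right
  rw [union_compl_self, hν.univ_eq_one] at this
  linarith [hν.nonneg Aᶜ]

theorem of_tendsto {l : Filter ι} [l.NeBot] {ν : ι → Set Γ → ℝ} {m : Set Γ → ℝ}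
    (hν : ∀ i, IsFinitelyAdditiveProbability (ν i))
    (hm : ∀ A, Tendsto (fun i => ν i A) l (𝓝 (m A))) : IsFinitelyAdditiveProbability m where
  univ_eq_one := tendsto_nhds_unique (hm univ)
    (tendsto_const_nhds.congr fun i => ((hν i).univ_eq_one).symm)
  nonneg A := ge_of_tendsto' (hm A) fun i => (hν i).nonneg A
  union_of_disjoint A B hAB := tendsto_nhds_unique (hm (A ∪ B))
    (((hm A).add (hm B)).congr fun i => ((hν i).union_of_disjoint A B hAB).symm)

end IsFinitelyAdditiveProbability

theorem isAmenableGroup_iff_exists_isFinitelyAdditiveProbability {Γ : Type*} [Group Γ] :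
    IsAmenableGroup Γ ↔ ∃ ν : Set Γ → ℝ, IsFinitelyAdditiveProbability ν ∧
      ∀ (g : Γ) (A : Set Γ), ν ((g * ·) '' A) = ν A :=
  ⟨fun ⟨ν, h1, h0, hadd, hinv⟩ => ⟨ν, ⟨h1, h0, hadd⟩, hinv⟩,
    fun ⟨ν, ⟨h1, h0, hadd⟩, hinv⟩ => ⟨ν, h1, h0, hadd, hinv⟩⟩

theorem isAmenableGroup_of_almost_invariant {Γ : Type*} [Group Γ]
    (h : ∀ (F : Finset Γ) (ε : ℝ), 0 < ε → ∃ ν : Set Γ → ℝ, IsFinitelyAdditiveProbability ν ∧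
      ∀ g ∈ F, ∀ A : Set Γ, |ν ((g * ·) '' A) - ν A| ≤ ε) :
    IsAmenableGroup Γ := by
  classical
  -- An ultralimit over the directed set of pairs `(F, n)`, with tolerance `1 / (n + 1)`.
  choose ν hν hinv using fun i : Finset Γ × ℕ => h i.1 (1 / ((i.2 : ℝ) + 1)) (by positivity)
  let U : Ultrafilter (Finset Γ × ℕ) := Ultrafilter.of atTop
  have hU : (U : Filter (Finset Γ × ℕ)) ≤ atTop := Ultrafilter.of_le _
  have hlim : ∀ A : Set Γ, ∃ c, Tendsto (fun i => ν i A) U (𝓝 c) := fun A => by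
    have hIcc : ((U.map fun i => ν i A : Ultrafilter ℝ) : Filter ℝ) ≤ 𝓟 (Icc 0 1) := by
      rw [Ultrafilter.coe_map, le_principal_iff]
      exact mem_map.2 (univ_mem' fun i => ⟨(hν i).nonneg A, (hν i).le_one A⟩)
    obtain ⟨c, -, hc⟩ := isCompact_Icc.ultrafilter_le_nhds _ hIcc
    exact ⟨c, by rwa [Ultrafilter.coe_map] at hc⟩
  choose m hm using hlim
  refine isAmenableGroup_iff_exists_isFinitelyAdditiveProbability.2
    ⟨m, .of_tendsto hν hm, fun g A => ?_⟩
  have hε : Tendsto (fun i : Finset Γ × ℕ => 1 / ((i.2 : ℝ) + 1)) U (𝓝 0) :=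
    (tendsto_one_div_add_atTop_nhds_zero_nat.comp tendsto_snd).mono_left
      (hU.trans_eq prod_atTop_atTop_eq.symm)
  have hg : ∀ᶠ i in (U : Filter (Finset Γ × ℕ)), g ∈ i.1 :=
    hU (eventually_atTop.2 ⟨({g}, 0), fun i hi => hi.1 (Finset.mem_singleton_self g)⟩)
  have hdiff : Tendsto (fun i => ν i ((g * ·) '' A) - ν i A) U (𝓝 0) :=
    squeeze_zero_norm' (hg.mono fun i hi => hinv i g hi A) hε
  exact sub_eq_zero.1 (tendsto_nhds_unique ((hm _).sub (hm A)) hdiff)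

section Pushforward

variable {α β : Type*} (μ : α → ℝ) (f : α → β)

noncomputable def pushforwardMass (A : Set β) : ℝ :=
  ∑' t, (f ⁻¹' A).indicator μ t

variable {μ}

theorem isFinitelyAdditiveProbability_pushforwardMass (hμ0 : ∀ t, 0 ≤ μ t)
    (hμ : HasSum μ 1) : IsFinitelyAdditiveProbability (pushforwardMass μ f) where
  univ_eq_one := by simp only [pushforwardMass, preimage_univ, indicator_univ, hμ.tsum_eq]
  nonneg A := tsum_nonneg fun t => indicator_nonneg (fun t _ => hμ0 t) t
  union_of_disjoint A B hAB := by
    simp only [pushforwardMass, preimage_union,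
      indicator_union_of_disjoint (hAB.preimage f)]
    exact (hμ.summable.indicator _).tsum_add (hμ.summable.indicator _)

theorem abs_pushforwardMass_mul_left_sub_le [Group α] [Group β] {a : α} {c : β}
    (hf : ∀ t, f (a * t) = c * f t) (hμ : Summable μ) (A : Set β) :
    |pushforwardMass μ f ((c * ·) '' A) - pushforwardMass μ f A| ≤
      ∑' t, |μ (a * t) - μ t| := by
  have hμa : Summable fun t => μ (a * t) := (Equiv.mulLeft a).summable_iff.2 hμ
  have htrans :
      pushforwardMass μ f ((c * ·) '' A) = ∑' t, (f ⁻¹' A).indicator (μ <| a * ·) t := by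
    rw [pushforwardMass, ← (Equiv.mulLeft a).tsum_eq]
    congr! 2 with t
    have hmem : a * t ∈ f ⁻¹' ((c * ·) '' A) ↔ t ∈ f ⁻¹' A := by
      rw [mem_preimage, hf, (mul_right_injective c).mem_set_image, mem_preimage]
    by_cases ht : t ∈ f ⁻¹' A
    · rw [Equiv.coe_mulLeft, indicator_of_mem (hmem.2 ht), indicator_of_mem ht]
    · rw [Equiv.coe_mulLeft, indicator_of_notMem (mt hmem.1 ht), indicator_of_notMem ht]
  have hdiff : Summable fun t => |μ (a * t) - μ t| := (hμa.sub hμ).abs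
  rw [htrans, pushforwardMass, ← (hμa.indicator _).tsum_sub (hμ.indicator _), ← indicator_sub,
    ← Real.norm_eq_abs]
  have hbound : ∀ t,
      ‖(f ⁻¹' A).indicator (fun t => μ (a * t) - μ t) t‖ ≤ |μ (a * t) - μ t| :=
    fun t => norm_indicator_le_norm_self _ t
  have hsum := hdiff.of_nonneg_of_le (fun _ => norm_nonneg _) hbound
  exact (norm_tsum_le_tsum_norm hsum).trans (hsum.tsum_le_tsum hbound hdiff)

end Pushforward

theorem Subgroup.exists_map_mul_left_eq {G : Type*} [Group G] (K : Subgroup G) :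
    ∃ ψ : G → K, ∀ (c : K) (x : G), ψ (c * x) = c * ψ x := by
  let σ : G → G := fun x => (Quotient.mk (QuotientGroup.rightRel K) x).out
  have hσ : ∀ x, x * (σ x)⁻¹ ∈ K := fun x =>
    QuotientGroup.rightRel_apply.1 (Quotient.mk_out x)
  have hσc : ∀ (c : K) x, σ (c * x) = σ x := fun c x => by
    have hcx : x * ((c : G) * x)⁻¹ ∈ K := by simp
    simp only [σ, Quotient.sound (QuotientGroup.rightRel_apply.2 hcx)]
  exact ⟨fun x => ⟨x * (σ x)⁻¹, hσ x⟩, fun c x => Subtype.ext <| by simp [hσc, mul_assoc]⟩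

theorem eventually_eq_of_tendsto_stoneCechUnit {α : Type*} [TopologicalSpace α]
    [DiscreteTopology α] {l : Filter α} {a : α}
    (h : Tendsto stoneCechUnit l (𝓝 (stoneCechUnit a))) : ∀ᶠ x in l, x = a := by
  classical
  have hχ : Continuous fun x : α => decide (x = a) := continuous_of_discreteTopology
  have := ((continuous_stoneCechExtend hχ).tendsto _).comp h
  rw [stoneCechExtend_extends, stoneCechExtend_stoneCechUnit, nhds_discrete, tendsto_pure] at this
  simpa using this

theorem exists_mem_corona_mem_closure_of_infinite {G : Type} [TopologicalSpace G]
    [DiscreteTopology G] {S : Set G} (hS : S.Infinite) :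
    ∃ z ∈ corona G, z ∈ closure (stoneCechUnit '' S) := by
  have := cofinite_inf_principal_neBot_iff.2 hS
  let V := Ultrafilter.of (cofinite ⊓ 𝓟 S)
  have hV : (V : Filter G) ≤ cofinite ⊓ 𝓟 S := Ultrafilter.of_le _
  obtain ⟨z, -, hz⟩ := isCompact_univ.ultrafilter_le_nhds (V.map stoneCechUnit) (by simp)
  rw [Ultrafilter.coe_map] at hz
  refine ⟨z, ?_, mem_closure_of_tendsto hz ?_⟩
  · rintro ⟨a, rfl⟩
    have hne : ∀ᶠ x in (V : Filter G), x ≠ a :=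
      hV.trans inf_le_left (eventually_cofinite_ne a)
    exact ((eventually_eq_of_tendsto_stoneCechUnit hz).and hne).exists.elim fun x hx => hx.2 hx.1
  · have hSV : S ∈ (V : Filter G) := hV.trans inf_le_right (mem_principal_self S)
    exact mem_of_superset hSV fun x hx => mem_image_of_mem _ hx

theorem lrTranslationExt_eq_self_of_mem_closure {G : Type} [Group G] [TopologicalSpace G]
    [DiscreteTopology G] {s : G × G} {S : Set G} (hS : ∀ x ∈ S, s.1 * x * s.2⁻¹ = x)
    {z : StoneCech G} (hz : z ∈ closure (stoneCechUnit '' S)) : lrTranslationExt G s z = z := by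
  refine Set.EqOn.closure ?_ (continuous_stoneCechExtend _) continuous_id hz
  rintro _ ⟨x, hx, rfl⟩
  exact (stoneCechExtend_stoneCechUnit _ x).trans (congrArg stoneCechUnit (hS x hx))

theorem isAmenableGroup_of_inClassS_of_forall_fixed {G : Type} [Group G] (hS : InClassS G)
    [TopologicalSpace G] [DiscreteTopology G] (K : Subgroup G) {z : StoneCech G}
    (hz : z ∈ corona G) (hfix : ∀ c ∈ K, lrTranslationExt G (c, c) z = z) :
    IsAmenableGroup K := by
  classical
  -- `InClassS` is stated for the topology `⊥` on `G`.
  obtain rfl := DiscreteTopology.eq_bot (α := G)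
  obtain ⟨ψ, hψ⟩ := K.exists_map_mul_left_eq
  refine isAmenableGroup_of_almost_invariant fun F ε hε => ?_
  obtain ⟨m, hm0, hm1, -, hm⟩ := hS (F.image fun c : K => ((c : G)⁻¹, (c : G)⁻¹)) ε hε
  refine ⟨pushforwardMass (m z) (ψ ∘ Prod.fst),
    isFinitelyAdditiveProbability_pushforwardMass _ (hm0 z hz) (hm1 z hz), fun c hc A => ?_⟩
  have hinv := hm _ (Finset.mem_image_of_mem _ hc) z hz
  rw [hfix _ (inv_mem c.2)] at hinv
  refine (abs_pushforwardMass_mul_left_sub_le _ (a := ((c : G), (c : G)))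
    (fun t => hψ c t.1) (hm1 z hz).summable A).trans ?_
  simpa [abs_sub_comm] using hinv

theorem finite_of_inClassS_of_nonamenable_centralizer_general
    (G : Type) [Group G] (hS : InClassS G)
    (H : Subgroup G) (hZ : ¬ IsAmenableGroup (Subgroup.centralizer (H : Set G))) :
    Finite H := by
  let _ : TopologicalSpace G := ⊥
  have _ : DiscreteTopology G := ⟨rfl⟩
  by_contra hfin
  obtain ⟨z, hz, hzH⟩ := exists_mem_corona_mem_closure_of_infinite
    (Set.infinite_coe_iff.1 (not_finite_iff_infinite.1 hfin))
  refine hZ (isAmenableGroup_of_inClassS_of_forall_fixed hS _ hz fun c hc => ?_)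
  refine lrTranslationExt_eq_self_of_mem_closure (fun x hx => ?_) hzH
  rw [← Subgroup.mem_centralizer_iff.1 hc x hx, mul_inv_cancel_right]

/-- if a countable group `G` is in Ozawa's class `S` and `H ≤ G` has
non-amenable centralizer `Z_G(H)`, then `H` is finite. -/
theorem finite_of_inClassS_of_nonamenable_centralizer
    (G : Type) [Group G] [Countable G] (hS : InClassS G)
    (H : Subgroup G) (hZ : ¬ IsAmenableGroup (Subgroup.centralizer (H : Set G))) :
    Finite H :=
  finite_of_inClassS_of_nonamenable_centralizer_general G hS H hZ
end
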